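/- arXiv:0810.4757 — 4 statements merged into one kernel-verified Lean document; each statement's English description precedes it below -/
import Mathlib

section
/- Let C be an additive category and D a full subcategory. Suppose X → M --g--> Y and X' → M' --g'--> Y' are almost D-split sequences in C such that both g and g' are right minimal morphisms. Then Y ≅ Y' if and only if the two sequences are isomorphic (i.e., there exist isomorphisms X ≅ X', M ≅ M', Y ≅ Y' commuting with the sequence maps). -/
open CategoryTheory Limits

universe v u u'

section Defs

variable {C : Type u} [Category.{v} C]

/-- `f` is a kernel of `g`. -/
def IsKernelOf [HasZeroMorphisms C] {X M Y : C} (f : X ⟶ M) (g : M ⟶ Y) : Prop :=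
  f ≫ g = 0 ∧ ∀ ⦃V : C⦄ (h : V ⟶ M), h ≫ g = 0 → ∃! h' : V ⟶ X, h' ≫ f = h

/-- `g` is a cokernel of `f`. -/
def IsCokernelOf [HasZeroMorphisms C] {X M Y : C} (f : X ⟶ M) (g : M ⟶ Y) : Prop :=
  f ≫ g = 0 ∧ ∀ ⦃V : C⦄ (h : M ⟶ V), f ≫ h = 0 → ∃! h' : Y ⟶ V, g ≫ h' = h

/-- `f : X ⟶ M` is a left `D`-approximation of `X`. -/
def IsLeftApprox (D : Set C) {X M : C} (f : X ⟶ M) : Prop :=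
  ∀ ⦃D' : C⦄, D' ∈ D → ∀ h : X ⟶ D', ∃ h' : M ⟶ D', f ≫ h' = h

/-- `g : M ⟶ Y` is a right `D`-approximation of `Y`. -/
def IsRightApprox (D : Set C) {M Y : C} (g : M ⟶ Y) : Prop :=
  ∀ ⦃D' : C⦄, D' ∈ D → ∀ h : D' ⟶ Y, ∃ h' : D' ⟶ M, h' ≫ g = h

/-- An almost `D`-split sequence `X --f--> M --g--> Y`. -/
structure IsAlmostDSplitSeq [HasZeroMorphisms C] (D : Set C) {X M Y : C}
    (f : X ⟶ M) (g : M ⟶ Y) : Prop where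
  mem : M ∈ D
  left : IsLeftApprox D f
  right : IsRightApprox D g
  ker : IsKernelOf f g
  coker : IsCokernelOf f g

/-- the additive closure `add M`: direct summands of finite direct sums of copies of `M`. -/
def addOf [HasZeroMorphisms C] [HasFiniteBiproducts C] (M : C) : Set C :=
  {X | ∃ (n : ℕ) (i : X ⟶ ⨁ (fun _ : Fin n => M)) (p : (⨁ (fun _ : Fin n => M)) ⟶ X),
    i ≫ p = 𝟙 X}

/-- `g : M ⟶ Y` is right minimal. -/
def RightMinimal {M Y : C} (g : M ⟶ Y) : Prop :=
  ∀ h : M ⟶ M, h ≫ g = g → IsIso h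

/-- `f : X ⟶ M` is left minimal. -/
def LeftMinimal {X M : C} (f : X ⟶ M) : Prop :=
  ∀ h : M ⟶ M, f ≫ h = f → IsIso h

/-- Two sequences `X → M → Y` and `X' → M' → Y'` are isomorphic. -/
def SeqIso {X M Y X' M' Y' : C} (f : X ⟶ M) (g : M ⟶ Y)
    (f' : X' ⟶ M') (g' : M' ⟶ Y') : Prop :=
  ∃ (a : X ≅ X') (b : M ≅ M') (c : Y ≅ Y'),
    f ≫ b.hom = a.hom ≫ f' ∧ g ≫ c.hom = b.hom ≫ g'

/-- An object is indecomposable. -/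
def Indec [HasZeroMorphisms C] (X : C) : Prop :=
  (𝟙 X ≠ 0) ∧ ∀ e : X ⟶ X, e ≫ e = e → e = 0 ∨ e = 𝟙 X

/-- `X` is a direct summand of `M`. -/
def IsSummand (X M : C) : Prop :=
  ∃ (s : X ⟶ M) (p : M ⟶ X), s ≫ p = 𝟙 X

end Defs

/-- Two rings are derived equivalent: there is a triangulated equivalence between the
derived categories of their module categories. -/
def DerivedEquivalent (Λ : Type u) (Γ : Type u') [Ring Λ] [Ring Γ] : Prop :=
  letI : HasDerivedCategory (ModuleCat.{u} Λ) := HasDerivedCategory.standard _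
  letI : HasDerivedCategory (ModuleCat.{u'} Γ) := HasDerivedCategory.standard _
  ∃ (e : DerivedCategory (ModuleCat.{u} Λ) ≌ DerivedCategory (ModuleCat.{u'} Γ))
    (h : e.functor.CommShift ℤ), letI := h; e.functor.IsTriangulated

section ModuleDefs

open CategoryTheory Limits

variable {A : Type u} [Ring A]

/-- An Auslander-Reiten (almost split) sequence `0 → X → M → Y → 0` in `A`-mod. -/
structure IsARSeq {X M Y : ModuleCat.{u} A} (f : X ⟶ M) (g : M ⟶ Y) : Prop where
  fgX : Module.Finite A X
  fgM : Module.Finite A M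
  fgY : Module.Finite A Y
  mono : Mono f
  epi : Epi g
  exact : LinearMap.range f.hom = LinearMap.ker g.hom
  nonsplit : ¬ ∃ s : Y ⟶ M, s ≫ g = 𝟙 Y
  indecX : Indec X
  indecY : Indec Y
  liftNonSplitEpi : ∀ ⦃V : ModuleCat.{u} A⦄ (h : V ⟶ Y), Module.Finite A V →
    (¬ ∃ s : Y ⟶ V, s ≫ h = 𝟙 Y) → ∃ t : V ⟶ M, t ≫ g = h
  extendNonSplitMono : ∀ ⦃V : ModuleCat.{u} A⦄ (h : X ⟶ V), Module.Finite A V →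
    (¬ ∃ r : V ⟶ X, h ≫ r = 𝟙 X) → ∃ t : M ⟶ V, f ≫ t = h

/-- vanishing of `Ext^i_A(X, Y)`. -/
def ExtVanish (X Y : ModuleCat.{u} A) (i : ℕ) : Prop :=
  letI : HasDerivedCategory (ModuleCat.{u} A) := HasDerivedCategory.standard _
  letI : HasExt (ModuleCat.{u} A) := hasExt_of_hasDerivedCategory _
  Subsingleton (Abelian.Ext X Y i)

/-- `T` is a tilting `A`-module of projective dimension at most `n`. -/
structure IsTiltingModule (n : ℕ) (T : ModuleCat.{u} A) : Prop where
  fg : Module.Finite A T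
  resolution : ∃ (P : ℕ → ModuleCat.{u} A) (d : ∀ i, P (i + 1) ⟶ P i) (ε : P 0 ⟶ T),
    (∀ i, Projective (P i)) ∧ (∀ i, Module.Finite A (P i)) ∧
    (∀ i, n ≤ i → IsZero (P (i + 1))) ∧
    Epi ε ∧ LinearMap.range (d 0).hom = LinearMap.ker ε.hom ∧
    (∀ i, LinearMap.range (d (i + 1)).hom = LinearMap.ker (d i).hom)
  ext_vanish : ∀ i : ℕ, 0 < i → ExtVanish T T i
  coresolution : ∃ (m : ℕ) (Q : ℕ → ModuleCat.{u} A) (δ : ∀ i, Q i ⟶ Q (i + 1))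
    (η : ModuleCat.of A A ⟶ Q 0),
    (∀ i, Q i ∈ addOf T) ∧ (∀ i, m ≤ i → IsZero (Q (i + 1))) ∧
    Mono η ∧ LinearMap.range η.hom = LinearMap.ker (δ 0).hom ∧
    (∀ i, LinearMap.range (δ i).hom = LinearMap.ker (δ (i + 1)).hom)

/-- a morphism factors through a projective module. -/
def FactorsThroughProj {U V : ModuleCat.{u} A} (h : U ⟶ V) : Prop :=
  ∃ (P : ModuleCat.{u} A) (u : U ⟶ P) (v : P ⟶ V), Projective P ∧ u ≫ v = h

end ModuleDefs

/-- the stable endomorphism ring of a module. -/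
def StableEnd {A : Type u} [Ring A] (U : ModuleCat.{u} A) : Type _ :=
  RingQuot (fun a b : CategoryTheory.End U => FactorsThroughProj a ∧ b = 0)

noncomputable instance {A : Type u} [Ring A] (U : ModuleCat.{u} A) : Ring (StableEnd U) :=
  inferInstanceAs (Ring (RingQuot _))

/-- Morita equivalence of rings. -/
def MoritaEq (Λ : Type u) (Γ : Type u') [Ring Λ] [Ring Γ] : Prop :=
  Nonempty (ModuleCat.{u} Λ ≌ ModuleCat.{u'} Γ)

/-- two rings are derived equivalent via a tilting module of projective dimension at most `n`:
the second is the endomorphism ring of a tilting module of projective dimension `≤ n`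
over the first. -/
def DerivedEqViaTilting (n : ℕ) (Λ : Type u) (Γ : Type u') [Ring Λ] [Ring Γ] : Prop :=
  ∃ T : ModuleCat.{u} Λ, IsTiltingModule n T ∧ Nonempty (Module.End Λ T ≃+* Γ)

/-! Minimal right approximations are unique up to isomorphism: lifting `g ≫ c` through `g'`
and `g' ≫ c⁻¹` through `g` gives `b : M ⟶ M'` and `b' : M' ⟶ M` whose composites are
endomorphisms over `Y` and `Y'`, hence isomorphisms by right minimality, so `b` is an
isomorphism. The kernels `f` and `f'` of `g` and `g'` then correspond under `b`. -/

section AlmostSplit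

variable {C : Type u} [Category.{v} C]

theorem isIso_of_isIso_comp_of_isIso_comp {M M' : C} (b : M ⟶ M') (b' : M' ⟶ M)
    [IsIso (b ≫ b')] [IsIso (b' ≫ b)] : IsIso b := by
  have : Mono b := mono_of_mono b b'
  have : IsSplitEpi b := IsSplitEpi.mk' ⟨inv (b' ≫ b) ≫ b', by simp⟩
  exact isIso_of_mono_of_isSplitEpi b

theorem RightMinimal.comp_mono {M Y Y' : C} {g : M ⟶ Y} (hg : RightMinimal g)
    (e : Y ⟶ Y') [Mono e] : RightMinimal (g ≫ e) :=
  fun h hh => hg h ((cancel_mono e).1 (by rw [Category.assoc, hh]))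

theorem RightMinimal.isIso_of_comp_eq {M M' Y : C} {g : M ⟶ Y} {g' : M' ⟶ Y}
    (hg : RightMinimal g) (hg' : RightMinimal g') {b : M ⟶ M'} {b' : M' ⟶ M}
    (hb : b ≫ g' = g) (hb' : b' ≫ g = g') : IsIso b := by
  have : IsIso (b ≫ b') := hg _ (by rw [Category.assoc, hb', hb])
  have : IsIso (b' ≫ b) := hg' _ (by rw [Category.assoc, hb, hb'])
  exact isIso_of_isIso_comp_of_isIso_comp b b'

theorem IsRightApprox.exists_iso_of_rightMinimal {D : Set C} {M M' Y Y' : C}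
    {g : M ⟶ Y} {g' : M' ⟶ Y'} (hg : IsRightApprox D g) (hg' : IsRightApprox D g')
    (hM : M ∈ D) (hM' : M' ∈ D)
    (hgm : RightMinimal g) (hgm' : RightMinimal g') (c : Y ≅ Y') :
    ∃ b : M ≅ M', g ≫ c.hom = b.hom ≫ g' := by
  obtain ⟨b, hb⟩ := hg' hM (g ≫ c.hom)
  obtain ⟨b', hb'⟩ := hg hM' (g' ≫ c.inv)
  have : IsIso b := (hgm.comp_mono c.hom).isIso_of_comp_eq hgm' hb
    (by rw [reassoc_of% hb', c.inv_hom_id, Category.comp_id])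
  exact ⟨asIso b, hb.symm⟩

theorem IsKernelOf.hom_ext [HasZeroMorphisms C] {X M Y V : C} {f : X ⟶ M} {g : M ⟶ Y}
    (hk : IsKernelOf f g) {u u' : V ⟶ X} (h : u ≫ f = u' ≫ f) : u = u' :=
  (hk.2 (u ≫ f) (by rw [Category.assoc, hk.1, comp_zero])).unique rfl h.symm

theorem IsKernelOf.exists_iso_of_comm [HasZeroMorphisms C] {X M Y X' M' Y' : C}
    {f : X ⟶ M} {g : M ⟶ Y} {f' : X' ⟶ M'} {g' : M' ⟶ Y'}
    (hk : IsKernelOf f g) (hk' : IsKernelOf f' g') (b : M ≅ M') (c : Y ⟶ Y') [Mono c]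
    (w : g ≫ c = b.hom ≫ g') : ∃ a : X ≅ X', f ≫ b.hom = a.hom ≫ f' := by
  obtain ⟨a, ha, -⟩ :=
    hk'.2 (f ≫ b.hom) (by rw [Category.assoc, ← w, reassoc_of% hk.1, zero_comp])
  obtain ⟨a', ha', -⟩ := hk.2 (f' ≫ b.inv) ((cancel_mono c).1 (by simp [w, hk'.1]))
  exact ⟨⟨a, a', hk.hom_ext (by simp [reassoc_of% ha, ha']),
    hk'.hom_ext (by simp [ha, reassoc_of% ha'])⟩, ha.symm⟩

end AlmostSplit

open CategoryTheory Limits in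
theorem almostSplit_rightMinimal_iso_general {C : Type u} [Category.{v} C] [Preadditive C]
    (D : Set C) {X M Y X' M' Y' : C}
    (f : X ⟶ M) (g : M ⟶ Y) (f' : X' ⟶ M') (g' : M' ⟶ Y')
    (h : IsAlmostDSplitSeq D f g) (h' : IsAlmostDSplitSeq D f' g')
    (hg : RightMinimal g) (hg' : RightMinimal g') :
    Nonempty (Y ≅ Y') ↔ SeqIso f g f' g' := by
  refine ⟨fun ⟨c⟩ => ?_, fun ⟨_, _, c, _⟩ => ⟨c⟩⟩
  obtain ⟨b, hb⟩ := h.right.exists_iso_of_rightMinimal h'.right h.mem h'.mem hg hg' c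
  obtain ⟨a, ha⟩ := h.ker.exists_iso_of_comm h'.ker b c.hom hb
  exact ⟨a, b, c, ha, hb⟩

open CategoryTheory Limits in
/-- Two almost `D`-split sequences with right minimal right maps are isomorphic
iff their right end terms are isomorphic. -/
theorem almostSplit_rightMinimal_iso {C : Type u} [Category.{v} C] [Preadditive C]
    [HasFiniteBiproducts C] (D : Set C) {X M Y X' M' Y' : C}
    (f : X ⟶ M) (g : M ⟶ Y) (f' : X' ⟶ M') (g' : M' ⟶ Y')
    (h : IsAlmostDSplitSeq D f g) (h' : IsAlmostDSplitSeq D f' g')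
    (hg : RightMinimal g) (hg' : RightMinimal g') :
    Nonempty (Y ≅ Y') ↔ SeqIso f g f' g' :=
  almostSplit_rightMinimal_iso_general D f g f' g' h h' hg hg'
end

section
/- Let C be an additive category and D a full subcategory. Suppose X --f--> M → Y and X' --f'--> M' → Y' are almost D-split sequences in C such that both f and f' are left minimal. Then X ≅ X' if and only if the two sequences are isomorphic. -/
open CategoryTheory Limits

universe v u u'

/-
Given `a : X ≅ X'`, the approximation properties give `b : M ⟶ M'` and `b' : M' ⟶ M` with
`f ≫ b = a.hom ≫ f'` and `f' ≫ b' = a.inv ≫ f`. Then `f ≫ b ≫ b' = f` and `f' ≫ b' ≫ b = f'`,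
so left minimality makes both composites invertible and hence `b` an isomorphism.
Since `g` and `g'` are cokernels of `f` and `f'`, `b` then induces an isomorphism `Y ≅ Y'`.
-/

namespace CategoryTheory

variable {C : Type u} [Category.{v} C]

theorem isIso_of_isIso_comp_of_isIso_comp {A B : C} (b : A ⟶ B) (b' : B ⟶ A)
    [IsIso (b ≫ b')] [IsIso (b' ≫ b)] : IsIso b :=
  have : Mono b := mono_of_mono b b'
  have : IsSplitEpi b := IsSplitEpi.mk' { section_ := inv (b' ≫ b) ≫ b' }
  isIso_of_mono_of_isSplitEpi b

theorem LeftMinimal.exists_iso_of_isLeftApprox (D : Set C) {X M X' M' : C}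
    {f : X ⟶ M} {f' : X' ⟶ M'} (hf : LeftMinimal f) (hf' : LeftMinimal f')
    (hl : IsLeftApprox D f) (hl' : IsLeftApprox D f') (hM : M ∈ D) (hM' : M' ∈ D)
    (a : X ≅ X') : ∃ b : M ≅ M', f ≫ b.hom = a.hom ≫ f' := by
  obtain ⟨b, hb⟩ := hl hM' (a.hom ≫ f')
  obtain ⟨b', hb'⟩ := hl' hM (a.inv ≫ f)
  have : IsIso (b ≫ b') := hf _ (by simp [reassoc_of% hb, hb'])
  have : IsIso (b' ≫ b) := hf' _ (by simp [reassoc_of% hb', hb])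
  have : IsIso b := isIso_of_isIso_comp_of_isIso_comp b b'
  exact ⟨asIso b, hb⟩

section

variable [HasZeroMorphisms C] {X M Y : C} {f : X ⟶ M} {g : M ⟶ Y}

theorem IsCokernelOf.hom_ext (hc : IsCokernelOf f g) {V : C} {u v : Y ⟶ V}
    (e : g ≫ u = g ≫ v) : u = v :=
  (hc.2 (g ≫ v) (by rw [reassoc_of% hc.1, zero_comp])).unique e rfl

theorem IsCokernelOf.exists_iso_of_comm {X' M' Y' : C} {f' : X' ⟶ M'} {g' : M' ⟶ Y'}
    (hc : IsCokernelOf f g) (hc' : IsCokernelOf f' g') (a : X ≅ X') (b : M ≅ M')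
    (w : f ≫ b.hom = a.hom ≫ f') : ∃ c : Y ≅ Y', g ≫ c.hom = b.hom ≫ g' := by
  have w' : f' ≫ b.inv = a.inv ≫ f := by
    rw [Iso.eq_inv_comp, ← reassoc_of% w, Iso.hom_inv_id, Category.comp_id]
  obtain ⟨c, hc_fac, -⟩ := hc.2 (b.hom ≫ g') (by rw [reassoc_of% w, hc'.1, comp_zero])
  obtain ⟨c', hc'_fac, -⟩ := hc'.2 (b.inv ≫ g) (by rw [reassoc_of% w', hc.1, comp_zero])
  refine ⟨⟨c, c', hc.hom_ext ?_, hc'.hom_ext ?_⟩, hc_fac⟩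
  · simp [reassoc_of% hc_fac, hc'_fac]
  · simp [reassoc_of% hc'_fac, hc_fac]

end

end CategoryTheory

open CategoryTheory Limits in
theorem almostSplit_leftMinimal_iso_general {C : Type u} [Category.{v} C] [Preadditive C]
    (D : Set C) {X M Y X' M' Y' : C}
    (f : X ⟶ M) (g : M ⟶ Y) (f' : X' ⟶ M') (g' : M' ⟶ Y')
    (h : IsAlmostDSplitSeq D f g) (h' : IsAlmostDSplitSeq D f' g')
    (hf : LeftMinimal f) (hf' : LeftMinimal f') :
    Nonempty (X ≅ X') ↔ SeqIso f g f' g' := by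
  refine ⟨fun ⟨a⟩ => ?_, fun ⟨a, _⟩ => ⟨a⟩⟩
  obtain ⟨b, hb⟩ := hf.exists_iso_of_isLeftApprox D hf' h.left h'.left h.mem h'.mem a
  obtain ⟨c, hc⟩ := h.coker.exists_iso_of_comm h'.coker a b hb
  exact ⟨a, b, c, hb, hc⟩

open CategoryTheory Limits in
/-- Two almost `D`-split sequences with left minimal left maps are isomorphic
iff their left end terms are isomorphic. -/
theorem almostSplit_leftMinimal_iso {C : Type u} [Category.{v} C] [Preadditive C]
    [HasFiniteBiproducts C] (D : Set C) {X M Y X' M' Y' : C}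
    (f : X ⟶ M) (g : M ⟶ Y) (f' : X' ⟶ M') (g' : M' ⟶ Y')
    (h : IsAlmostDSplitSeq D f g) (h' : IsAlmostDSplitSeq D f' g')
    (hf : LeftMinimal f) (hf' : LeftMinimal f') :
    Nonempty (X ≅ X') ↔ SeqIso f g f' g' :=
  almostSplit_leftMinimal_iso_general D f g f' g' h h' hf hf'
end

section
/- Let A be a ring with identity and D a covariantly finite full subcategory of A-Mod. Let Y(D) = {X : Ext¹_A(D, X) = 0 for all D ∈ D}. Then for any A-module X that is cogenerated by D (admits a monomorphism into an object of D) and lies in Y(D), there is a short exact sequence 0 → X → D₀ → Y → 0 with D₀ ∈ D which is an almost D-split sequence. -/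
open CategoryTheory Limits

universe v u u'

/-!
The sequence is `0 → X → M → coker f → 0` for a left `D`-approximation `f : X ⟶ M`. Since `X`
embeds into an object of `D`, that embedding factors through `f`, so `f` is a monomorphism and
the sequence is short exact. The long exact `Ext(W, -)`-sequence together with `Ext¹(W, X) = 0`
shows that every map from `W ∈ D` to `coker f` lifts to `M`, i.e. the cokernel map is a right
`D`-approximation.
-/

section Approximations

variable {C : Type u} [Category.{v} C]

lemma IsLeftApprox.mono_of_mono {D : Set C} {X M D₀ : C} {f : X ⟶ M} (hf : IsLeftApprox D f)
    (hD₀ : D₀ ∈ D) (m : X ⟶ D₀) [Mono m] : Mono f := by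
  obtain ⟨t, rfl⟩ := hf hD₀ m
  exact CategoryTheory.mono_of_mono f t

section ZeroMorphisms

variable [HasZeroMorphisms C] {X M Y : C} {f : X ⟶ M} {g : M ⟶ Y}

lemma isKernelOf_of_isLimit {w : f ≫ g = 0} (hf : IsLimit (KernelFork.ofι f w)) :
    IsKernelOf f g := by
  refine ⟨w, fun _ h hh => ?_⟩
  obtain ⟨l, hl⟩ := KernelFork.IsLimit.lift' hf h hh
  exact ⟨l, hl, fun _ hy => Fork.IsLimit.hom_ext hf (hy.trans hl.symm)⟩

lemma isCokernelOf_of_isColimit {w : f ≫ g = 0} (hg : IsColimit (CokernelCofork.ofπ g w)) :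
    IsCokernelOf f g := by
  refine ⟨w, fun _ h hh => ?_⟩
  obtain ⟨l, hl⟩ := CokernelCofork.IsColimit.desc' hg h hh
  exact ⟨l, hl, fun _ hy => Cofork.IsColimit.hom_ext hg (hy.trans hl.symm)⟩

end ZeroMorphisms

namespace CategoryTheory.ShortComplex.ShortExact

open Abelian

variable [Abelian C] [HasExt.{w} C] {S : ShortComplex C}

lemma exists_lift_of_subsingleton_ext (hS : S.ShortExact) {W : C}
    [Subsingleton (Ext W S.X₁ 1)] (h : W ⟶ S.X₃) : ∃ t : W ⟶ S.X₂, t ≫ S.g = h := by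
  obtain ⟨x, hx⟩ := Ext.covariant_sequence_exact₃ W hS (Ext.mk₀ h) (zero_add 1)
    (Subsingleton.elim _ _)
  obtain ⟨t, rfl⟩ := (Ext.mk₀_bijective W S.X₂).2 x
  exact ⟨t, (Ext.mk₀_bijective W S.X₃).1 (by rwa [Ext.mk₀_comp_mk₀] at hx)⟩

lemma isRightApprox_g (hS : S.ShortExact) {D : Set C}
    (hD : ∀ W ∈ D, Subsingleton (Ext W S.X₁ 1)) : IsRightApprox D S.g :=
  fun W hW h => have := hD W hW; hS.exists_lift_of_subsingleton_ext h

end CategoryTheory.ShortComplex.ShortExact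

end Approximations

open CategoryTheory Limits in
/-- If `D` is covariantly finite in `A`-Mod, then every module `X` cogenerated by `D`
with `Ext¹(D, X) = 0` sits in an almost `D`-split short exact sequence `0 → X → D₀ → Y → 0`. -/
theorem exists_almostSplit_of_covariantlyFinite {A : Type u} [Ring A]
    (D : Set (ModuleCat.{u} A))
    (hD : ∀ X : ModuleCat.{u} A, ∃ (M : ModuleCat.{u} A) (f : X ⟶ M), M ∈ D ∧ IsLeftApprox D f)
    (X : ModuleCat.{u} A)
    (hcogen : ∃ (D₀ : ModuleCat.{u} A) (m : X ⟶ D₀), D₀ ∈ D ∧ Mono m)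
    (hext : ∀ W ∈ D, ExtVanish W X 1) :
    ∃ (D₀ Y : ModuleCat.{u} A) (f : X ⟶ D₀) (g : D₀ ⟶ Y),
      Mono f ∧ Epi g ∧ IsAlmostDSplitSeq D f g := by
  let := HasDerivedCategory.standard (ModuleCat.{u} A)
  let := hasExt_of_hasDerivedCategory (ModuleCat.{u} A)
  obtain ⟨M, f, hM, hf⟩ := hD X
  obtain ⟨D₀, m, hD₀, hm⟩ := hcogen
  have : Mono f := hf.mono_of_mono hD₀ m
  have hS : (ShortComplex.mk f (cokernel.π f) (cokernel.condition f)).ShortExact :=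
    { exact := ShortComplex.exact_of_g_is_cokernel _ (cokernelIsCokernel f) }
  exact ⟨M, cokernel f, f, cokernel.π f, inferInstance, inferInstance,
    { mem := hM
      left := hf
      right := hS.isRightApprox_g hext
      ker := isKernelOf_of_isLimit hS.exact.fIsKernel
      coker := isCokernelOf_of_isColimit hS.exact.gIsCokernel }⟩
end

section
/- Let A be an Artin algebra and 0 → X_i → M_i → X_{i-1} → 0 Auslander-Reiten sequences in A-mod for i = 1, …, n; set M = ⊕_{i=1}^n M_i. If X_n ∈ add(M), then X_0 ∈ add(M) and consequently add(M ⊕ X_n) = add(M) = add(M ⊕ X_0), so End_A(M ⊕ X_n) and End_A(M ⊕ X_0) are Morita equivalent. -/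
open CategoryTheory Limits

universe v u u'

/-!
If `X` is an indecomposable direct summand of the middle term `M'` of an Auslander–Reiten
sequence `X' → M' → Y'`, and `X → M → Y` is the Auslander–Reiten sequence starting at `X`, then
`Y'` is a direct summand of `M`: the composite `X → M' → Y'` is not split mono, so it extends to
`t : M → Y'`; if `t` were not split epi it would lift to `w : M → M'`, and the difference between
the inclusion `X → M'` and `X → M → M'` factors through `X'`. This writes `𝟙 X` as the sum of an
endomorphism factoring through `X → M` and one factoring through `X → X'`. Neither is a unit (the
first would split `X → M`, the second `X' → M'`), contradicting that `End X` is local by Fitting's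
lemma.

In the chain `0 → X_{i+1} → M_i → X_i → 0`, applying this twice turns "`X_{i+1}` is a summand of
`M_j`" into "`X_i` is a summand of `M_{j-1}`". Since `End X_n` is local, `X_n ∈ add M` makes it a
summand of some `M_j`, and descending reaches `X_0`. Finally `M ⊕ X_n` and `M ⊕ X_0` have the same
additive closure, and whenever `U ∈ add V` and `V ∈ add U` the functor
`Hom_{End U}(Hom(V, U), -)` is an equivalence `End U-Mod ≌ End V-Mod`.
-/

section AddOf

variable {C : Type u} [Category.{v} C] [Preadditive C]

lemma comp_sum_comp_eq_sum {κ : Type*} {X Y W : C} {Z : κ → C} (s : Finset κ) (x : X ⟶ Y)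
    (c : ∀ t, Y ⟶ Z t) (d : ∀ t, Z t ⟶ Y) (y : Y ⟶ W) :
    x ≫ (∑ t ∈ s, c t ≫ d t) ≫ y = ∑ t ∈ s, (x ≫ c t) ≫ (d t ≫ y) := by
  simp [Preadditive.comp_sum, Preadditive.sum_comp]

lemma sum_comp_π_comp_ι_comp {ι : Type} [Fintype ι] {F : ι → C} [HasBiproduct F] {X Y : C}
    (i : X ⟶ ⨁ F) (p : ⨁ F ⟶ Y) :
    ∑ j, (i ≫ biproduct.π F j) ≫ (biproduct.ι F j ≫ p) = i ≫ p := by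
  rw [← comp_sum_comp_eq_sum, biproduct.total, Category.id_comp]

variable [HasFiniteBiproducts C]

lemma mem_addOf_of_sum_eq_id {M X : C} {κ : Type*} [Fintype κ] (a : κ → (X ⟶ M))
    (b : κ → (M ⟶ X)) (h : ∑ t, a t ≫ b t = 𝟙 X) : X ∈ addOf M := by
  let e := Fintype.equivFin κ
  refine ⟨Fintype.card κ, biproduct.lift fun j => a (e.symm j),
    biproduct.desc fun j => b (e.symm j), ?_⟩
  rw [biproduct.lift_desc, ← h]
  exact e.symm.sum_comp fun t => a t ≫ b t

lemma exists_sum_eq_id_of_mem_addOf {M X : C} (h : X ∈ addOf M) :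
    ∃ (k : ℕ) (a : Fin k → (X ⟶ M)) (b : Fin k → (M ⟶ X)), ∑ t, a t ≫ b t = 𝟙 X := by
  obtain ⟨k, i, p, hip⟩ := h
  exact ⟨k, fun j => i ≫ biproduct.π _ j, fun j => biproduct.ι (fun _ => M) j ≫ p,
    (sum_comp_π_comp_ι_comp i p).trans hip⟩

lemma mem_addOf_self (M : C) : M ∈ addOf M :=
  mem_addOf_of_sum_eq_id (κ := Unit) (fun _ => 𝟙 M) (fun _ => 𝟙 M) (by simp)

lemma mem_addOf_trans {M X Y : C} (hXY : X ∈ addOf Y) (hYM : Y ∈ addOf M) : X ∈ addOf M := by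
  obtain ⟨k, a, b, hab⟩ := exists_sum_eq_id_of_mem_addOf hXY
  obtain ⟨l, c, d, hcd⟩ := exists_sum_eq_id_of_mem_addOf hYM
  refine mem_addOf_of_sum_eq_id (fun t : Fin k × Fin l => a t.1 ≫ c t.2)
    (fun t => d t.2 ≫ b t.1) ?_
  simp_rw [Fintype.sum_prod_type, ← comp_sum_comp_eq_sum, hcd, Category.id_comp, hab]

lemma IsSummand.mem_addOf {M X Y : C} (hXY : IsSummand X Y) (hY : Y ∈ addOf M) :
    X ∈ addOf M := by
  obtain ⟨s, p, hsp⟩ := hXY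
  exact mem_addOf_trans (mem_addOf_of_sum_eq_id (κ := Unit) (fun _ => s) (fun _ => p)
    (by simpa using hsp)) hY

lemma biprod_mem_addOf [HasBinaryBiproducts C] {M X Y : C} (hX : X ∈ addOf M) (hY : Y ∈ addOf M) :
    (X ⊞ Y) ∈ addOf M := by
  obtain ⟨k, a, b, hab⟩ := exists_sum_eq_id_of_mem_addOf hX
  obtain ⟨l, c, d, hcd⟩ := exists_sum_eq_id_of_mem_addOf hY
  refine mem_addOf_of_sum_eq_id
    (Sum.elim (fun t => biprod.fst ≫ a t) (fun t => biprod.snd ≫ c t))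
    (Sum.elim (fun t => b t ≫ biprod.inl) (fun t => d t ≫ biprod.inr)) ?_
  simp_rw [Fintype.sum_sum_type, Sum.elim_inl, Sum.elim_inr, ← comp_sum_comp_eq_sum, hab, hcd,
    Category.id_comp, biprod.total]

lemma addOf_biprod_eq [HasBinaryBiproducts C] {M X : C} (hX : X ∈ addOf M) :
    addOf (M ⊞ X) = addOf M :=
  Set.ext fun _ => ⟨fun h => mem_addOf_trans h (biprod_mem_addOf (mem_addOf_self M) hX),
    fun h => mem_addOf_trans h
      (IsSummand.mem_addOf ⟨biprod.inl, biprod.fst, biprod.inl_fst⟩ (mem_addOf_self _))⟩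

end AddOf

section Summands

variable {C : Type u} [Category.{v} C]

lemma exists_comp_comp_eq_id_of_isUnit {X Y : C} {x : X ⟶ Y} {y : Y ⟶ X}
    (h : IsUnit (M := End X) (x ≫ y)) : ∃ v : X ⟶ X, x ≫ y ≫ v = 𝟙 X := by
  have := (isUnit_iff_isIso _).mp h
  exact ⟨inv (x ≫ y), by rw [← Category.assoc, IsIso.hom_inv_id]⟩

lemma Indec.comp_eq_id_of_comp_eq_id [HasZeroMorphisms C] {X Z : C} (hZ : Indec Z)
    (hX : 𝟙 X ≠ 0) {i : X ⟶ Z} {r : Z ⟶ X} (h : i ≫ r = 𝟙 X) : r ≫ i = 𝟙 Z := by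
  refine (hZ.2 (r ≫ i) (by rw [Category.assoc, reassoc_of% h])).resolve_left fun h0 => hX ?_
  calc 𝟙 X = (i ≫ r) ≫ (i ≫ r) := by rw [h, Category.id_comp]
    _ = i ≫ (r ≫ i) ≫ r := by simp only [Category.assoc]
    _ = 0 := by rw [h0, zero_comp, comp_zero]

variable [Preadditive C]

lemma exists_isSummand_of_sum_eq_id {Z : C} [IsLocalRing (End Z)] {κ : Type*} [Fintype κ]
    {N : κ → C} (a : ∀ t, Z ⟶ N t) (b : ∀ t, N t ⟶ Z) (h : ∑ t, a t ≫ b t = 𝟙 Z) :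
    ∃ t, IsSummand Z (N t) := by
  obtain ⟨t, -, ht⟩ := IsLocalRing.exists_of_isUnit_sum (R := End Z) (ι := κ) (s := Finset.univ)
    (f := fun t => a t ≫ b t) (by rw [h]; exact isUnit_one)
  obtain ⟨v, hv⟩ := exists_comp_comp_eq_id_of_isUnit ht
  exact ⟨t, a t, b t ≫ v, hv⟩

lemma exists_isSummand_of_mem_addOf_biproduct [HasFiniteBiproducts C] {ι : Type} [Fintype ι]
    {F : ι → C} {Z : C} [IsLocalRing (End Z)] (h : Z ∈ addOf (⨁ F)) : ∃ j, IsSummand Z (F j) := by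
  obtain ⟨k, a, b, hab⟩ := exists_sum_eq_id_of_mem_addOf h
  obtain ⟨-, s, p, hsp⟩ := exists_isSummand_of_sum_eq_id a b hab
  exact exists_isSummand_of_sum_eq_id _ _ ((sum_comp_π_comp_ι_comp s p).trans hsp)

end Summands

section Fitting

/-- Fitting: for large `k`, `M = ker fᵏ ⊕ range fᵏ`, and the projection onto `range fᵏ` is an
idempotent. -/
theorem Module.End.isUnit_or_isNilpotent_of_isIdempotentElem {R M : Type*} [Ring R]
    [AddCommGroup M] [Module R M] [IsArtinian R M] [IsNoetherian R M]
    (h : ∀ e : Module.End R M, IsIdempotentElem e → e = 0 ∨ e = 1) (f : Module.End R M) :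
    IsUnit f ∨ IsNilpotent f := by
  obtain ⟨k, hk⟩ :=
    (f.eventually_isCompl_ker_pow_range_pow.and (Filter.eventually_ge_atTop 1)).exists
  rcases h _ (Submodule.isIdempotentElem_projection hk.1.symm) with h0 | h1
  · right
    refine ⟨k, LinearMap.range_eq_bot.mp ?_⟩
    rw [← Submodule.range_projection hk.1.symm, h0, LinearMap.range_zero]
  · left
    have hinj : Function.Injective (f ^ k) := by
      rw [← LinearMap.ker_eq_bot, ← Submodule.ker_projection hk.1.symm, h1]
      exact LinearMap.ker_id
    rw [← isUnit_pow_iff (by omega : k ≠ 0), Module.End.isUnit_iff]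
    exact IsArtinian.bijective_of_injective_endomorphism _ hinj

lemma Indec.isLocalRing_end {A : Type u} [Ring A] {Z : ModuleCat.{v} A} [IsArtinian A Z]
    [IsNoetherian A Z] (hZ : Indec Z) : IsLocalRing (End Z) := by
  let φ := ModuleCat.endRingEquiv Z
  have : Nontrivial (End Z) := ⟨⟨1, 0, hZ.1⟩⟩
  refine IsLocalRing.of_isUnit_or_isUnit_one_sub_self fun a => ?_
  have hidem : ∀ e : Module.End A Z, IsIdempotentElem e → e = 0 ∨ e = 1 := fun e he => by
    simpa [φ, Module.End.one_eq_id] using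
      (hZ.2 (φ.symm e) (congrArg φ.symm he)).imp (congrArg φ) (congrArg φ)
  rcases Module.End.isUnit_or_isNilpotent_of_isIdempotentElem hidem (φ a) with hu | hn
  · exact Or.inl ((MulEquiv.isUnit_map φ).mp hu)
  · exact Or.inr (by simpa using (hn.map φ.symm).isUnit_one_sub)

end Fitting

namespace IsARSeq

variable {A : Type u} [Ring A] {X M Y : ModuleCat.{u} A} {f : X ⟶ M} {g : M ⟶ Y}

lemma shortComplex_exact (h : IsARSeq f g) :
    (ShortComplex.moduleCatMkOfKerLERange f g h.exact.le).Exact :=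
  ShortComplex.Exact.moduleCat_of_range_eq_ker f g h.exact

lemma not_exists_retraction (h : IsARSeq f g) : ¬ ∃ r : M ⟶ X, f ≫ r = 𝟙 X := fun ⟨r, hr⟩ =>
  h.nonsplit ⟨_, (ShortComplex.Splitting.ofExactOfRetraction _ h.shortComplex_exact r hr h.epi).s_g⟩

lemma exists_lift (h : IsARSeq f g) {V : ModuleCat.{u} A} (k : V ⟶ M) (hk : k ≫ g = 0) :
    ∃ q : V ⟶ X, q ≫ f = k :=
  have : Mono (ShortComplex.moduleCatMkOfKerLERange f g h.exact.le).f := h.mono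
  ⟨h.shortComplex_exact.lift k hk, h.shortComplex_exact.lift_f k hk⟩

lemma isLocalRing_end_left [IsArtinianRing A] (h : IsARSeq f g) : IsLocalRing (End X) :=
  have := h.fgX
  h.indecX.isLocalRing_end

theorem isSummand_of_isSummand [IsArtinianRing A] (h : IsARSeq f g)
    {X' M' Y' : ModuleCat.{u} A} {f' : X' ⟶ M'} {g' : M' ⟶ Y'} (h' : IsARSeq f' g')
    (hs : IsSummand X M') : IsSummand Y' M := by
  have := h.isLocalRing_end_left
  obtain ⟨s, p, hsp⟩ := hs
  have hns : ¬ ∃ r : Y' ⟶ X, (s ≫ g') ≫ r = 𝟙 X := fun ⟨r, hr⟩ =>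
    h'.nonsplit ⟨r ≫ s, by
      simpa only [Category.assoc] using h'.indecY.comp_eq_id_of_comp_eq_id h.indecX.1 hr⟩
  obtain ⟨t, ht⟩ := h.extendNonSplitMono (s ≫ g') h'.fgY hns
  by_contra hY'
  obtain ⟨w, hw⟩ := h'.liftNonSplitEpi t h.fgM fun ⟨σ, hσ⟩ => hY' ⟨σ, t, hσ⟩
  obtain ⟨q, hq⟩ := h'.exists_lift (s - f ≫ w)
    (by rw [Preadditive.sub_comp, Category.assoc, hw, ht, sub_self])
  have hsum : f ≫ w ≫ p + q ≫ f' ≫ p = 𝟙 X := by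
    rw [← Category.assoc q, hq, Preadditive.sub_comp, Category.assoc, add_sub_cancel, hsp]
  rcases IsLocalRing.isUnit_or_isUnit_of_add_one (R := End X) hsum with hu | hu
  · obtain ⟨v, hv⟩ := exists_comp_comp_eq_id_of_isUnit hu
    exact h.not_exists_retraction ⟨(w ≫ p) ≫ v, by simpa only [Category.assoc] using hv⟩
  · obtain ⟨v, hv⟩ := exists_comp_comp_eq_id_of_isUnit hu
    have := h'.indecX.comp_eq_id_of_comp_eq_id h.indecX.1 (by simpa only [Category.assoc] using hv)
    exact h'.not_exists_retraction ⟨p ≫ v ≫ q, by simpa only [Category.assoc] using this⟩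

end IsARSeq

section Chain

variable {A : Type u} [Ring A] [IsArtinianRing A] {n : ℕ} {X Ms : ℕ → ModuleCat.{u} A}
  {f : ∀ i, X (i + 1) ⟶ Ms i} {g : ∀ i, Ms i ⟶ X i}

lemma exists_isSummand_chain_zero (hAR : ∀ i < n, IsARSeq (f i) (g i)) :
    ∀ j i, j < n → i < n → IsSummand (X (i + 1)) (Ms j) → ∃ k < n, IsSummand (X 0) (Ms k) := by
  intro j
  induction j with
  | zero => exact fun i _ hi hs => ⟨i, hi, (hAR i hi).isSummand_of_isSummand (hAR 0 (by omega)) hs⟩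
  | succ j ih =>
    intro i hj hi hs
    have hX : IsSummand (X i) (Ms j) := (hAR j (by omega)).isSummand_of_isSummand (hAR i hi)
      ((hAR i hi).isSummand_of_isSummand (hAR (j + 1) hj) hs)
    cases i with
    | zero => exact ⟨j, by omega, hX⟩
    | succ i => exact ih i (by omega) (by omega) hX

lemma chain_zero_mem_addOf (hAR : ∀ i < n, IsARSeq (f i) (g i))
    (hmem : X n ∈ addOf (⨁ fun i : Fin n => Ms i.1)) : X 0 ∈ addOf (⨁ fun i : Fin n => Ms i.1) := by
  cases n with
  | zero => exact hmem
  | succ m =>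
    have := (hAR m (by omega)).isLocalRing_end_left
    obtain ⟨j, hj⟩ := exists_isSummand_of_mem_addOf_biproduct hmem
    obtain ⟨k, hk, hs⟩ := exists_isSummand_chain_zero hAR j m j.2 (by omega) hj
    exact hs.mem_addOf (IsSummand.mem_addOf
      ⟨_, _, biproduct.ι_π_self (fun i : Fin (m + 1) => Ms i.1) ⟨k, hk⟩⟩ (mem_addOf_self _))

end Chain

namespace MoritaOfAdd

variable {C : Type u} [Category.{v} C] [Preadditive C]

def precompLinear (U : C) {W V : C} (ψ : W ⟶ V) : (V ⟶ U) →ₗ[End U] (W ⟶ U) where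
  toFun φ := ψ ≫ φ
  map_add' := Preadditive.comp_add _ _ _ ψ
  map_smul' _ _ := (Category.assoc _ _ _).symm

variable {U V : C} {N : Type v} [AddCommGroup N] [Module (End U) N]

scoped instance : SMul (End V) ((V ⟶ U) →ₗ[End U] N) where
  smul s F := F ∘ₗ precompLinear U s

@[simp]
lemma smul_apply (s : End V) (F : (V ⟶ U) →ₗ[End U] N) (φ : V ⟶ U) :
    (s • F) φ = F (s ≫ φ) := rfl

scoped instance : Module (End V) ((V ⟶ U) →ₗ[End U] N) where
  one_smul F := LinearMap.ext fun φ => by simp [End.one_def]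
  mul_smul s s' F := LinearMap.ext fun φ => by simp [End.mul_def]
  smul_zero _ := rfl
  smul_add _ _ _ := rfl
  add_smul s s' F := LinearMap.ext fun φ =>
    (congrArg F (Preadditive.add_comp _ _ _ s s' φ)).trans (map_add F _ _)
  zero_smul F := LinearMap.ext fun φ => by simp

def homFunctor (U V : C) : ModuleCat.{v} (End U) ⥤ ModuleCat.{v} (End V) where
  obj N := ModuleCat.of (End V) ((V ⟶ U) →ₗ[End U] N)
  map f := ModuleCat.ofHom
    { toFun F := f.hom ∘ₗ F
      map_add' _ _ := LinearMap.comp_add _ _ _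
      map_smul' _ _ := rfl }

def unitMap (U V : C) (N : Type v) [AddCommGroup N] [Module (End U) N] :
    N →ₗ[End U] ((U ⟶ V) →ₗ[End V] ((V ⟶ U) →ₗ[End U] N)) where
  toFun n :=
    { toFun ψ := LinearMap.toSpanSingleton (End U) N n ∘ₗ precompLinear U ψ
      map_add' ψ ψ' := LinearMap.ext fun φ =>
        (congrArg (fun x : End U => x • n) (Preadditive.add_comp _ _ _ ψ ψ' φ)).trans
          (add_smul (R := End U) _ _ n)
      map_smul' s ψ := LinearMap.ext fun φ =>
        congrArg (fun x : End U => x • n) (Category.assoc ψ s φ) }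
  map_add' n n' := LinearMap.ext fun _ => LinearMap.ext fun _ => smul_add _ n n'
  map_smul' r n := LinearMap.ext fun ψ => LinearMap.ext fun φ =>
    (mul_smul (α := End U) _ r n).symm.trans
      (congrArg (fun x : End U => x • n) (Category.assoc r ψ φ).symm)

lemma unitMap_apply (U V : C) (N : Type v) [AddCommGroup N] [Module (End U) N] (n : N)
    (ψ : U ⟶ V) (φ : V ⟶ U) : unitMap U V N n ψ φ = LinearMap.toSpanSingleton (End U) N n (ψ ≫ φ) :=
  rfl

variable {κ : Type*} [Fintype κ] {a : κ → (U ⟶ V)} {b : κ → (V ⟶ U)}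

def unitEquiv (hab : ∑ t, a t ≫ b t = 𝟙 U) (N : Type v) [AddCommGroup N] [Module (End U) N] :
    N ≃ₗ[End U] ((U ⟶ V) →ₗ[End V] ((V ⟶ U) →ₗ[End U] N)) where
  __ := unitMap U V N
  invFun Φ := ∑ t, Φ (a t) (b t)
  left_inv n := by
    change ∑ t, unitMap U V N n (a t) (b t) = n
    simp_rw [unitMap_apply, ← map_sum, hab]
    exact one_smul _ n
  right_inv Φ := LinearMap.ext fun ψ => LinearMap.ext fun φ => by
    have hψ : ∑ t, a t ≫ b t ≫ ψ = ψ := by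
      simp_rw [← Category.assoc, ← Preadditive.sum_comp, hab, Category.id_comp]
    change unitMap U V N (∑ t, Φ (a t) (b t)) ψ φ = Φ ψ φ
    calc unitMap U V N (∑ t, Φ (a t) (b t)) ψ φ
        = ∑ t, Φ (a t) (b t ≫ ψ ≫ φ) := by
          simp_rw [unitMap_apply, LinearMap.toSpanSingleton_apply, Finset.smul_sum,
            ← LinearMap.map_smul]
          rfl
      _ = ∑ t, Φ (a t ≫ b t ≫ ψ) φ := by
          simp_rw [← Category.assoc (b _), ← smul_apply, ← LinearMap.map_smul]
          rfl
      _ = Φ ψ φ := by rw [← LinearMap.sum_apply, ← map_sum, hψ]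

def unitIso (hab : ∑ t, a t ≫ b t = 𝟙 U) :
    𝟭 (ModuleCat.{v} (End U)) ≅ homFunctor U V ⋙ homFunctor V U :=
  NatIso.ofComponents (fun N => (unitEquiv hab N).toModuleIso) fun f =>
    ModuleCat.hom_ext <| LinearMap.ext fun n => LinearMap.ext fun _ => LinearMap.ext fun _ =>
      (map_smul f.hom _ n).symm

end MoritaOfAdd

open MoritaOfAdd in
theorem moritaEq_end_of_mem_addOf {C : Type u} [Category.{v} C] [Preadditive C]
    [HasFiniteBiproducts C] {U V : C} (hU : U ∈ addOf V) (hV : V ∈ addOf U) :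
    MoritaEq (End U) (End V) := by
  obtain ⟨k, a, b, hab⟩ := exists_sum_eq_id_of_mem_addOf hU
  obtain ⟨l, c, d, hcd⟩ := exists_sum_eq_id_of_mem_addOf hV
  exact ⟨.mk (homFunctor U V) (homFunctor V U) (unitIso hab) (unitIso hcd).symm⟩

open CategoryTheory Limits in
/-- For a chain of Auslander-Reiten sequences `0 → X_{i+1} → M_i → X_i → 0` (`i < n`)
with `M = ⊕ M_i`: if `X_n ∈ add M` then `X_0 ∈ add M`,
`add (M ⊕ X_n) = add M = add (M ⊕ X_0)`, and `End (M ⊕ X_n)`, `End (M ⊕ X_0)`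
are Morita equivalent. -/
theorem morita_of_ARSeq_chain {R : Type u} [CommRing R] [IsArtinianRing R] {A : Type u} [Ring A] [Algebra R A]
    [Module.Finite R A]
    (n : ℕ) (X : ℕ → ModuleCat.{u} A) (Ms : ℕ → ModuleCat.{u} A)
    (f : ∀ i : ℕ, X (i + 1) ⟶ Ms i) (g : ∀ i : ℕ, Ms i ⟶ X i)
    (hAR : ∀ i < n, IsARSeq (f i) (g i))
    (hmem : X n ∈ addOf (⨁ (fun i : Fin n => Ms i.1))) :
    X 0 ∈ addOf (⨁ (fun i : Fin n => Ms i.1)) ∧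
    addOf ((⨁ (fun i : Fin n => Ms i.1)) ⊞ X n) = addOf (⨁ (fun i : Fin n => Ms i.1)) ∧
    addOf ((⨁ (fun i : Fin n => Ms i.1)) ⊞ X 0) = addOf (⨁ (fun i : Fin n => Ms i.1)) ∧
    MoritaEq (End ((⨁ (fun i : Fin n => Ms i.1)) ⊞ X n))
      (End ((⨁ (fun i : Fin n => Ms i.1)) ⊞ X 0)) := by
  have : IsArtinianRing A := .of_finite R A
  have hX0 := chain_zero_mem_addOf hAR hmem
  have hn := addOf_biprod_eq hmem
  have h0 := addOf_biprod_eq hX0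
  refine ⟨hX0, hn, h0, moritaEq_end_of_mem_addOf ?_ ?_⟩
  · rw [h0, ← hn]
    exact mem_addOf_self _
  · rw [hn, ← h0]
    exact mem_addOf_self _
end
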